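/- arXiv:2404.04357 — 2 statements merged into one kernel-verified Lean document; each statement's English description precedes it below -/
import Mathlib

section
/- Let {P^{Q,μ}} be a family of row-stochastic kernels on a finite set 𝒳, indexed by Q : 𝒳 × 𝒜 → ℝ and probability distributions μ on 𝒳, satisfying Σ_{x'} |P^{Q₁,μ₁}(x,x') − P^{Q₂,μ₂}(x,x')| ≤ L_p ‖μ₁−μ₂‖_TV + L_Q ‖Q₁−Q₂‖_∞ for all x, with 0 < L_p < 1 and L_Q > 0. Suppose μ₁ and μ₂ are probability distributions with μ₁ = μ₁ P^{Q₁,μ₁} and μ₂ = μ₂ P^{Q₂,μ₂}, and P^{Q₂,μ₂} satisfies the Doeblin condition P^{Q₂,μ₂}(x,x') ≥ β ν(x') for a probability distribution ν and β ∈ ((1+L_p)/2, 1). Then ‖μ₁ − μ₂‖_TV ≤ (L_Q/(2β − 1 − L_p)) ‖Q₁ − Q₂‖_∞. -/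
/-!
Write `m = μ₁ - μ₂`. Stationarity gives the splitting
`m = m P₂ + μ₁ (P₁ - P₂)`. Because `m` has total mass zero, the Doeblin minorisation makes
`P₂` a contraction with `‖m P₂‖_TV ≤ (1 - β) ‖m‖_TV`, while every row of `P₁ - P₂` has mass zero
and `ℓ¹`-norm at most `L_p ‖m‖_TV + L_Q ‖Q₁ - Q₂‖_∞`, so `‖μ₁ (P₁ - P₂)‖_TV` is at most half of
that. Hence `‖m‖_TV ≤ (1 - β) ‖m‖_TV + (L_p ‖m‖_TV + L_Q ‖Q₁ - Q₂‖_∞) / 2`, which rearranges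
to the claim.
-/

open Finset

/-- A probability distribution on a finite set. -/
def IsProb {𝒳 : Type*} [Fintype 𝒳] (μ : 𝒳 → ℝ) : Prop :=
  (∀ x, 0 ≤ μ x) ∧ ∑ x, μ x = 1

/-- Total variation norm: `‖m‖_TV = sup_{A ⊆ 𝒳} |Σ_{x∈A} m(x)|`. -/
noncomputable def tvNorm {𝒳 : Type*} [Fintype 𝒳] (m : 𝒳 → ℝ) : ℝ :=
  ⨆ A : Finset 𝒳, |∑ x ∈ A, m x|

/-- Sup norm `‖Q‖_∞ = max_{(x,a)} |Q(x,a)|` for `Q : 𝒳 × 𝒜 → ℝ`. -/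
noncomputable def supNorm {𝒳 𝒜 : Type*} [Fintype 𝒳] [Fintype 𝒜] (Q : 𝒳 → 𝒜 → ℝ) : ℝ :=
  ⨆ q : 𝒳 × 𝒜, |Q q.1 q.2|

/-- A row-stochastic kernel on a finite set. -/
def IsKernel {𝒳 : Type*} [Fintype 𝒳] (P : 𝒳 → 𝒳 → ℝ) : Prop :=
  (∀ x x', 0 ≤ P x x') ∧ ∀ x, ∑ x', P x x' = 1

section TotalVariation

variable {𝒳 : Type*} [Fintype 𝒳]

lemma abs_sum_le_tvNorm (m : 𝒳 → ℝ) (A : Finset 𝒳) : |∑ x ∈ A, m x| ≤ tvNorm m :=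
  le_ciSup (f := fun A : Finset 𝒳 => |∑ x ∈ A, m x|) (Set.finite_range _).bddAbove A

lemma tvNorm_le {m : 𝒳 → ℝ} {c : ℝ} (h : ∀ A : Finset 𝒳, |∑ x ∈ A, m x| ≤ c) :
    tvNorm m ≤ c :=
  ciSup_le h

lemma tvNorm_nonneg (m : 𝒳 → ℝ) : 0 ≤ tvNorm m := by
  simpa using abs_sum_le_tvNorm m ∅

lemma tvNorm_neg (m : 𝒳 → ℝ) : tvNorm (-m) = tvNorm m := by
  simp only [tvNorm, Pi.neg_apply, sum_neg_distrib, abs_neg]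

lemma tvNorm_add_le (m n : 𝒳 → ℝ) : tvNorm (m + n) ≤ tvNorm m + tvNorm n :=
  tvNorm_le fun A => by
    simpa only [Pi.add_apply, sum_add_distrib] using
      (abs_add_le _ _).trans (add_le_add (abs_sum_le_tvNorm m A) (abs_sum_le_tvNorm n A))

lemma abs_sum_le_half_sum_abs_of_sum_eq_zero [DecidableEq 𝒳] {v : 𝒳 → ℝ}
    (hv : ∑ x, v x = 0) (A : Finset 𝒳) : |∑ x ∈ A, v x| ≤ (∑ x, |v x|) / 2 := by
  have hcompl : ∑ x ∈ Aᶜ, v x = -∑ x ∈ A, v x := by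
    rw [eq_neg_iff_add_eq_zero, add_comm, sum_add_sum_compl, hv]
  have hA := abs_sum_le_sum_abs v A
  have hAc := abs_sum_le_sum_abs v Aᶜ
  rw [hcompl, abs_neg] at hAc
  linarith [sum_add_sum_compl A fun x => |v x|]

lemma sum_mul_le_mul_tvNorm {m g : 𝒳 → ℝ} {c : ℝ} (hg₀ : ∀ x, 0 ≤ g x) (hgc : ∀ x, g x ≤ c)
    (hc : 0 ≤ c) : ∑ x, m x * g x ≤ c * tvNorm m := by
  classical
  have hpos : ∀ x, m x * g x ≤ (if 0 ≤ m x then m x else 0) * c := by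
    intro x
    split_ifs with h
    · exact mul_le_mul_of_nonneg_left (hgc x) h
    · rw [zero_mul]
      exact mul_nonpos_of_nonpos_of_nonneg (not_le.1 h).le (hg₀ x)
  calc ∑ x, m x * g x ≤ (∑ x ∈ univ.filter (fun x => 0 ≤ m x), m x) * c := by
        rw [sum_filter, sum_mul]
        exact sum_le_sum fun x _ => hpos x
    _ ≤ tvNorm m * c :=
        mul_le_mul_of_nonneg_right ((le_abs_self _).trans (abs_sum_le_tvNorm m _)) hc
    _ = c * tvNorm m := mul_comm _ _

lemma abs_sum_mul_le_mul_tvNorm {m g : 𝒳 → ℝ} {c : ℝ} (hg₀ : ∀ x, 0 ≤ g x)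
    (hgc : ∀ x, g x ≤ c) (hc : 0 ≤ c) : |∑ x, m x * g x| ≤ c * tvNorm m := by
  have hneg := sum_mul_le_mul_tvNorm (m := -m) hg₀ hgc hc
  simp only [tvNorm_neg, Pi.neg_apply, neg_mul, sum_neg_distrib] at hneg
  exact abs_le.2 ⟨by linarith, sum_mul_le_mul_tvNorm hg₀ hgc hc⟩

lemma tvNorm_mul_kernel_le_of_doeblin {P : 𝒳 → 𝒳 → ℝ} {ν m : 𝒳 → ℝ} {β : ℝ}
    (hP : ∀ x, ∑ x', P x x' = 1) (hν : ∑ x, ν x = 1) (hβ : β ≤ 1)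
    (hDoe : ∀ x x', β * ν x' ≤ P x x') (hm : ∑ x, m x = 0) :
    tvNorm (fun x' => ∑ x, m x * P x x') ≤ (1 - β) * tvNorm m := by
  classical
  refine tvNorm_le fun A => ?_
  have hminor : ∀ x (B : Finset 𝒳), β * ∑ x' ∈ B, ν x' ≤ ∑ x' ∈ B, P x x' := fun x B => by
    rw [mul_sum]
    exact sum_le_sum fun x' _ => hDoe x x'
  -- Subtracting the constant `β ν(A)` is free because `m` has mass zero.
  have hshift : ∑ x' ∈ A, ∑ x, m x * P x x' =
      ∑ x, m x * (∑ x' ∈ A, P x x' - β * ∑ x' ∈ A, ν x') := by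
    rw [sum_comm]
    simp only [mul_sub, sum_sub_distrib, ← sum_mul, hm, zero_mul, sub_zero]
    simp only [mul_sum]
  rw [hshift]
  refine abs_sum_mul_le_mul_tvNorm (fun x => sub_nonneg.2 (hminor x A)) (fun x => ?_)
    (sub_nonneg.2 hβ)
  have hrow := sum_add_sum_compl A (P x)
  have hνA := sum_add_sum_compl A ν
  rw [hP x] at hrow
  rw [hν] at hνA
  nlinarith [hminor x Aᶜ]

lemma tvNorm_mul_le_half_of_sum_eq_zero {μ : 𝒳 → ℝ} {D : 𝒳 → 𝒳 → ℝ} {δ : ℝ} (hμ : IsProb μ)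
    (hD : ∀ x, ∑ x', D x x' = 0) (hδ : ∀ x, ∑ x', |D x x'| ≤ δ) :
    tvNorm (fun x' => ∑ x, μ x * D x x') ≤ δ / 2 := by
  classical
  refine tvNorm_le fun A => ?_
  calc |∑ x' ∈ A, ∑ x, μ x * D x x'| = |∑ x, μ x * ∑ x' ∈ A, D x x'| := by
        simp only [mul_sum]; rw [sum_comm]
    _ ≤ ∑ x, μ x * |∑ x' ∈ A, D x x'| := by
        refine (abs_sum_le_sum_abs _ _).trans_eq (sum_congr rfl fun x _ => ?_)
        rw [abs_mul, abs_of_nonneg (hμ.1 x)]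
    _ ≤ ∑ x, μ x * (δ / 2) := sum_le_sum fun x _ => mul_le_mul_of_nonneg_left
        ((abs_sum_le_half_sum_abs_of_sum_eq_zero (hD x) A).trans (by linarith [hδ x])) (hμ.1 x)
    _ = δ / 2 := by rw [← sum_mul, hμ.2, one_mul]

end TotalVariation

theorem equilibrium_lipschitz_in_Q_general {𝒳 𝒜 : Type*} [Fintype 𝒳] [Fintype 𝒜]
    (P : (𝒳 → 𝒜 → ℝ) → (𝒳 → ℝ) → 𝒳 → 𝒳 → ℝ)
    (Lp LQ : ℝ)
    (hker : ∀ Q μ, IsProb μ → IsKernel (P Q μ))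
    (hlip : ∀ Q₁ Q₂ μ₁ μ₂, IsProb μ₁ → IsProb μ₂ → ∀ x,
      ∑ x', |P Q₁ μ₁ x x' - P Q₂ μ₂ x x'| ≤
        Lp * tvNorm (fun y => μ₁ y - μ₂ y) + LQ * supNorm (fun x a => Q₁ x a - Q₂ x a))
    (Q₁ Q₂ : 𝒳 → 𝒜 → ℝ)
    (μ₁ μ₂ : 𝒳 → ℝ) (hμ₁ : IsProb μ₁) (hμ₂ : IsProb μ₂)
    (hfix₁ : ∀ x', (∑ x, μ₁ x * P Q₁ μ₁ x x') = μ₁ x')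
    (hfix₂ : ∀ x', (∑ x, μ₂ x * P Q₂ μ₂ x x') = μ₂ x')
    (ν : 𝒳 → ℝ) (hν : IsProb ν)
    (β : ℝ) (hβ : (1 + Lp) / 2 < β ∧ β < 1)
    (hDoe : ∀ x x', β * ν x' ≤ P Q₂ μ₂ x x') :
    tvNorm (fun x => μ₁ x - μ₂ x) ≤
      LQ / (2 * β - 1 - Lp) * supNorm (fun x a => Q₁ x a - Q₂ x a) := by
  set m : 𝒳 → ℝ := fun x => μ₁ x - μ₂ x
  set s := supNorm (fun x a => Q₁ x a - Q₂ x a)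
  have hrow₁ := (hker Q₁ μ₁ hμ₁).2
  have hrow₂ := (hker Q₂ μ₂ hμ₂).2
  have hm : ∑ x, m x = 0 := by simp only [m, sum_sub_distrib, hμ₁.2, hμ₂.2, sub_self]
  have hsplit : m = (fun x' => ∑ x, m x * P Q₂ μ₂ x x') +
      fun x' => ∑ x, μ₁ x * (P Q₁ μ₁ x x' - P Q₂ μ₂ x x') := by
    ext x'
    simp only [m, Pi.add_apply, sub_mul, mul_sub, sum_sub_distrib, hfix₁, hfix₂]
    ring
  have hrec : tvNorm m ≤ (1 - β) * tvNorm m + (Lp * tvNorm m + LQ * s) / 2 :=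
    calc tvNorm m = tvNorm (_ + _) := congrArg tvNorm hsplit
      _ ≤ _ := tvNorm_add_le _ _
      _ ≤ _ := add_le_add (tvNorm_mul_kernel_le_of_doeblin hrow₂ hν.2 hβ.2.le hDoe hm)
        (tvNorm_mul_le_half_of_sum_eq_zero hμ₁
          (fun x => by rw [sum_sub_distrib, hrow₁, hrow₂, sub_self]) (hlip Q₁ Q₂ μ₁ μ₂ hμ₁ hμ₂))
  rw [div_mul_eq_mul_div, le_div_iff₀ (by linarith [hβ.1])]
  nlinarith [tvNorm_nonneg m]

/-- Equilibrium distributions of nearby Q-functions are close: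
`‖μ₁ − μ₂‖_TV ≤ (L_Q/(2β − 1 − L_p)) ‖Q₁ − Q₂‖_∞`. -/
theorem equilibrium_lipschitz_in_Q {𝒳 𝒜 : Type*} [Fintype 𝒳] [Fintype 𝒜]
    (P : (𝒳 → 𝒜 → ℝ) → (𝒳 → ℝ) → 𝒳 → 𝒳 → ℝ)
    (Lp LQ : ℝ) (hLp : 0 < Lp ∧ Lp < 1) (hLQ : 0 < LQ)
    (hker : ∀ Q μ, IsProb μ → IsKernel (P Q μ))
    (hlip : ∀ Q₁ Q₂ μ₁ μ₂, IsProb μ₁ → IsProb μ₂ → ∀ x,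
      ∑ x', |P Q₁ μ₁ x x' - P Q₂ μ₂ x x'| ≤
        Lp * tvNorm (fun y => μ₁ y - μ₂ y) + LQ * supNorm (fun x a => Q₁ x a - Q₂ x a))
    (Q₁ Q₂ : 𝒳 → 𝒜 → ℝ)
    (μ₁ μ₂ : 𝒳 → ℝ) (hμ₁ : IsProb μ₁) (hμ₂ : IsProb μ₂)
    (hfix₁ : ∀ x', (∑ x, μ₁ x * P Q₁ μ₁ x x') = μ₁ x')
    (hfix₂ : ∀ x', (∑ x, μ₂ x * P Q₂ μ₂ x x') = μ₂ x')
    (ν : 𝒳 → ℝ) (hν : IsProb ν)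
    (β : ℝ) (hβ : (1 + Lp) / 2 < β ∧ β < 1)
    (hDoe : ∀ x x', β * ν x' ≤ P Q₂ μ₂ x x') :
    tvNorm (fun x => μ₁ x - μ₂ x) ≤
      LQ / (2 * β - 1 - Lp) * supNorm (fun x a => Q₁ x a - Q₂ x a) :=
  equilibrium_lipschitz_in_Q_general P Lp LQ hker hlip Q₁ Q₂ μ₁ μ₂ hμ₁ hμ₂ hfix₁ hfix₂ ν hν β hβ
    hDoe
end

section
/- (Lipschitz continuity of the Bellman operator pair.) Let 𝒳, 𝒜 be finite sets, h, γ > 0, f a cost with |f(x,a,μ₁) − f(x,a,μ₂)| ≤ L_f ‖μ₁−μ₂‖_TV, and p(x'|x,a,μ) transition probabilities with Σ_{x'} |p(x'|x,a,μ₁) − p(x'|x,a,μ₂)| ≤ L_p ‖μ₁−μ₂‖_TV for all x,a. Define the Bellman operator ℬ_μ(Q)(x,a) = h f(x,a,μ) + e^{−γh} Σ_{x'} p(x'|x,a,μ) min_{a'} Q(x',a'). Then for all Q₁, Q₂ : 𝒳 × 𝒜 → ℝ and probability distributions μ₁, μ₂ on 𝒳: ‖ℬ_{μ₁}(Q₁)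 − ℬ_{μ₂}(Q₂)‖_∞ ≤ (h L_f + e^{−γh} L_p ‖Q₁‖_∞) ‖μ₁ − μ₂‖_TV + e^{−γh} ‖Q₁ − Q₂‖_∞. -/
open Finset

/-! The cost term contributes `h L_f ‖μ₁ - μ₂‖_TV` directly. In the transition term, write
`p₁ m₁ - p₂ m₂ = (p₁ - p₂) m₁ + p₂ (m₁ - m₂)` with `mᵢ(x') = min_{a'} Qᵢ(x', a')`: the first part
is bounded by `L_p ‖μ₁ - μ₂‖_TV ‖Q₁‖_∞` since `|m₁| ≤ ‖Q₁‖_∞`, the second by `‖Q₁ - Q₂‖_∞` because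
`p₂` is a probability vector and the minimum over actions is `1`-Lipschitz in the sup norm. -/

section SupNorm

variable {𝒳 𝒜 : Type*} [Fintype 𝒳] [Fintype 𝒜]

lemma abs_le_supNorm (Q : 𝒳 → 𝒜 → ℝ) (x : 𝒳) (a : 𝒜) : |Q x a| ≤ supNorm Q :=
  le_ciSup (f := fun q : 𝒳 × 𝒜 => |Q q.1 q.2|) (Set.finite_range _).bddAbove (x, a)

lemma supNorm_nonneg (Q : 𝒳 → 𝒜 → ℝ) : 0 ≤ supNorm Q :=
  Real.iSup_nonneg fun _ => abs_nonneg _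

lemma supNorm_le [Nonempty 𝒳] [Nonempty 𝒜] {Q : 𝒳 → 𝒜 → ℝ} {C : ℝ}
    (hQ : ∀ x a, |Q x a| ≤ C) : supNorm Q ≤ C :=
  ciSup_le fun q => hQ q.1 q.2

end SupNorm

section ciInf

variable {ι : Type*} [Finite ι] [Nonempty ι]

lemma ciInf_le_ciInf_add {f g : ι → ℝ} {C : ℝ} (hfg : ∀ i, f i ≤ g i + C) :
    ⨅ i, f i ≤ (⨅ i, g i) + C :=
  sub_le_iff_le_add.1 <| le_ciInf fun i =>
    sub_le_iff_le_add.2 <| (ciInf_le (Set.finite_range f).bddBelow i).trans (hfg i)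

lemma abs_ciInf_sub_ciInf_le {f g : ι → ℝ} {C : ℝ} (hfg : ∀ i, |f i - g i| ≤ C) :
    |(⨅ i, f i) - ⨅ i, g i| ≤ C :=
  abs_sub_le_iff.2
    ⟨sub_le_iff_le_add'.2 <| ciInf_le_ciInf_add fun i =>
        sub_le_iff_le_add'.1 (abs_sub_le_iff.1 (hfg i)).1,
      sub_le_iff_le_add'.2 <| ciInf_le_ciInf_add fun i =>
        sub_le_iff_le_add'.1 (abs_sub_le_iff.1 (hfg i)).2⟩

lemma abs_ciInf_le {f : ι → ℝ} {C : ℝ} (hf : ∀ i, |f i| ≤ C) : |⨅ i, f i| ≤ C :=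
  let i₀ := Classical.arbitrary ι
  abs_le.2 ⟨le_ciInf fun i => (abs_le.1 (hf i)).1,
    (ciInf_le (Set.finite_range f).bddBelow i₀).trans (abs_le.1 (hf i₀)).2⟩

end ciInf

lemma abs_sum_mul_sub_sum_mul_le {ι : Type*} [Fintype ι] {p q u v : ι → ℝ} {N D : ℝ}
    (hq : IsProb q) (hu : ∀ i, |u i| ≤ N) (huv : ∀ i, |u i - v i| ≤ D) :
    |∑ i, p i * u i - ∑ i, q i * v i| ≤ (∑ i, |p i - q i|) * N + D := by
  have hsplit : ∑ i, p i * u i - ∑ i, q i * v i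
      = ∑ i, ((p i - q i) * u i + q i * (u i - v i)) := by
    rw [← sum_sub_distrib]
    exact sum_congr rfl fun _ _ => by ring
  calc |∑ i, p i * u i - ∑ i, q i * v i|
      ≤ ∑ i, |(p i - q i) * u i + q i * (u i - v i)| := hsplit ▸ abs_sum_le_sum_abs _ _
    _ ≤ ∑ i, (|p i - q i| * N + q i * D) := by
        refine sum_le_sum fun i _ => (abs_add_le _ _).trans (add_le_add ?_ ?_)
        · rw [abs_mul]
          exact mul_le_mul_of_nonneg_left (hu i) (abs_nonneg _)
        · rw [abs_mul, abs_of_nonneg (hq.1 i)]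
          exact mul_le_mul_of_nonneg_left (huv i) (hq.1 i)
    _ = (∑ i, |p i - q i|) * N + D := by
        rw [sum_add_distrib, ← sum_mul, ← sum_mul, hq.2, one_mul]

lemma abs_add_mul_sub_add_mul_le {h e a b c d : ℝ} (hh : 0 ≤ h) (he : 0 ≤ e) :
    |(h * a + e * b) - (h * c + e * d)| ≤ h * |a - c| + e * |b - d| := by
  calc |(h * a + e * b) - (h * c + e * d)| = |h * (a - c) + e * (b - d)| := by ring_nf
    _ ≤ |h * (a - c)| + |e * (b - d)| := abs_add_le _ _
    _ = h * |a - c| + e * |b - d| := by rw [abs_mul, abs_mul, abs_of_nonneg hh, abs_of_nonneg he]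

theorem bellman_operator_lipschitz_general {𝒳 𝒜 : Type*} [Fintype 𝒳] [Fintype 𝒜]
    [Nonempty 𝒳] [Nonempty 𝒜]
    (h γ Lf Lp : ℝ) (hh : 0 < h)
    (f : 𝒳 → 𝒜 → (𝒳 → ℝ) → ℝ)
    (hflip : ∀ x a μ₁ μ₂, |f x a μ₁ - f x a μ₂| ≤ Lf * tvNorm (fun y => μ₁ y - μ₂ y))
    (p : 𝒳 → 𝒳 → 𝒜 → (𝒳 → ℝ) → ℝ)
    (hp : ∀ x a μ, IsProb (fun x' => p x' x a μ))
    (hplip : ∀ x a μ₁ μ₂,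
      ∑ x', |p x' x a μ₁ - p x' x a μ₂| ≤ Lp * tvNorm (fun y => μ₁ y - μ₂ y))
    (Q₁ Q₂ : 𝒳 → 𝒜 → ℝ) (μ₁ μ₂ : 𝒳 → ℝ) :
    supNorm (fun x a =>
        (h * f x a μ₁ + Real.exp (-γ * h) * ∑ x', p x' x a μ₁ * (⨅ a', Q₁ x' a')) -
        (h * f x a μ₂ + Real.exp (-γ * h) * ∑ x', p x' x a μ₂ * (⨅ a', Q₂ x' a'))) ≤
      (h * Lf + Real.exp (-γ * h) * Lp * supNorm Q₁) * tvNorm (fun y => μ₁ y - μ₂ y) +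
        Real.exp (-γ * h) * supNorm (fun x a => Q₁ x a - Q₂ x a) := by
  set e := Real.exp (-γ * h)
  have he : 0 ≤ e := (Real.exp_pos _).le
  set T := tvNorm (fun y => μ₁ y - μ₂ y)
  have hmin : ∀ x', |⨅ a', Q₁ x' a'| ≤ supNorm Q₁ := fun x' =>
    abs_ciInf_le (abs_le_supNorm Q₁ x')
  have hmin_sub : ∀ x', |(⨅ a', Q₁ x' a') - ⨅ a', Q₂ x' a'| ≤
      supNorm (fun x a => Q₁ x a - Q₂ x a) := fun x' =>
    abs_ciInf_sub_ciInf_le (abs_le_supNorm (fun x a => Q₁ x a - Q₂ x a) x')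
  refine supNorm_le fun x a => (abs_add_mul_sub_add_mul_le hh.le he).trans ?_
  have htransition := (abs_sum_mul_sub_sum_mul_le (p := fun x' => p x' x a μ₁) (hp x a μ₂)
    hmin hmin_sub).trans
      (add_le_add_left (mul_le_mul_of_nonneg_right (hplip x a μ₁ μ₂) (supNorm_nonneg Q₁)) _)
  calc h * |f x a μ₁ - f x a μ₂| + e * |∑ x', p x' x a μ₁ * (⨅ a', Q₁ x' a') -
        ∑ x', p x' x a μ₂ * (⨅ a', Q₂ x' a')|
      ≤ h * (Lf * T) + e * (Lp * T * supNorm Q₁ + supNorm (fun x a => Q₁ x a - Q₂ x a)) :=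
        add_le_add (mul_le_mul_of_nonneg_left (hflip x a μ₁ μ₂) hh.le)
          (mul_le_mul_of_nonneg_left htransition he)
    _ = _ := by ring

/-- Lipschitz continuity of the Bellman operator pair:
`‖ℬ_{μ₁}(Q₁) − ℬ_{μ₂}(Q₂)‖_∞ ≤ (h L_f + e^{−γh} L_p ‖Q₁‖_∞)‖μ₁−μ₂‖_TV + e^{−γh}‖Q₁−Q₂‖_∞`,
where `ℬ_μ(Q)(x,a) = h f(x,a,μ) + e^{−γh} Σ_{x'} p(x'|x,a,μ) min_{a'} Q(x',a')`. -/
theorem bellman_operator_lipschitz {𝒳 𝒜 : Type*} [Fintype 𝒳] [Fintype 𝒜]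
    [Nonempty 𝒳] [Nonempty 𝒜]
    (h γ Lf Lp : ℝ) (hh : 0 < h) (hγ : 0 < γ)
    (f : 𝒳 → 𝒜 → (𝒳 → ℝ) → ℝ)
    (hflip : ∀ x a μ₁ μ₂, |f x a μ₁ - f x a μ₂| ≤ Lf * tvNorm (fun y => μ₁ y - μ₂ y))
    (p : 𝒳 → 𝒳 → 𝒜 → (𝒳 → ℝ) → ℝ)
    (hp : ∀ x a μ, IsProb (fun x' => p x' x a μ))
    (hplip : ∀ x a μ₁ μ₂,
      ∑ x', |p x' x a μ₁ - p x' x a μ₂| ≤ Lp * tvNorm (fun y => μ₁ y - μ₂ y))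
    (Q₁ Q₂ : 𝒳 → 𝒜 → ℝ) (μ₁ μ₂ : 𝒳 → ℝ) (hμ₁ : IsProb μ₁) (hμ₂ : IsProb μ₂) :
    supNorm (fun x a =>
        (h * f x a μ₁ + Real.exp (-γ * h) * ∑ x', p x' x a μ₁ * (⨅ a', Q₁ x' a')) -
        (h * f x a μ₂ + Real.exp (-γ * h) * ∑ x', p x' x a μ₂ * (⨅ a', Q₂ x' a'))) ≤
      (h * Lf + Real.exp (-γ * h) * Lp * supNorm Q₁) * tvNorm (fun y => μ₁ y - μ₂ y) +
        Real.exp (-γ * h) * supNorm (fun x a => Q₁ x a - Q₂ x a) :=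
  bellman_operator_lipschitz_general h γ Lf Lp hh f hflip p hp hplip Q₁ Q₂ μ₁ μ₂
end
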